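/- arXiv:1911.07285 — 6 statements merged into one kernel-verified Lean document; each statement's English description precedes it below -/
import Mathlib

section
/- Let K be an n×n real symmetric positive definite matrix, P an n×q real matrix of full column rank q with n>q, y∈ℝⁿ, and a>0, b>0. Set G = PᵀK⁻¹P, β̂ = G⁻¹PᵀK⁻¹y, and w = (yᵀK⁻¹y − β̂ᵀGβ̂)/2. Then the marginal likelihood, obtained by integrating the Gaussian likelihood against a flat prior on β and an inverse-Gamma(a,b) prior on σ², satisfies ∫₀^∞ ∫_{ℝ^q} (2πσ²)^{−n/2} det(K)^{−1/2} exp(−(y−Pβ)ᵀK⁻¹(y−Pβ)/(2σ²)) · (b^a/Γ(a)) (σ²)^{−a−1} exp(−b/σ²) dβ d(σ²) = (2π)^{−(n−q)/2} · det(G·K)^{−1/2} · (b^a/Γ(a)) · Γ(a+(n−q)/2) / (b+w)^{a+(n−q)/2}. -/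
/-! With the flat prior, completing the square in `β` around the generalised least-squares
estimate `β̂` splits the exponent as `(β - β̂)ᵀ G (β - β̂) + 2w`, so the `β`-integral is a
Gaussian integral equal to `(2πσ²)^{q/2} det(G)^{-1/2} e^{-w/σ²}`. What remains in `σ²` is an
unnormalised inverse-Gamma density with shape `a + (n - q)/2` and scale `b + w`, which
integrates to `Γ(a + (n - q)/2) / (b + w)^{a + (n - q)/2}`. -/

open MeasureTheory Matrix Real
open scoped MatrixOrder

section Gaussian

variable {ι : Type*} [Fintype ι]

theorem integral_exp_neg_dotProduct_self :
    ∫ u : ι → ℝ, exp (-(u ⬝ᵥ u)) = π ^ (Fintype.card ι / 2 : ℝ) := by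
  have hprod (u : ι → ℝ) : exp (-(u ⬝ᵥ u)) = ∏ i, exp (-(u i ^ 2)) := by
    rw [← exp_sum, dotProduct, ← Finset.sum_neg_distrib]
    simp_rw [sq]
  have hline : ∫ t : ℝ, exp (-(t ^ 2)) = π ^ (1 / 2 : ℝ) := by
    simpa [sqrt_eq_rpow] using integral_gaussian 1
  simp_rw [hprod]
  rw [volume_pi, integral_fintype_prod_eq_pow (fun t : ℝ => exp (-(t ^ 2))), hline,
    ← rpow_natCast, ← rpow_mul pi_pos.le]
  ring_nf

variable [DecidableEq ι]

theorem integral_comp_mulVec {E : Type*} [NormedAddCommGroup E] [NormedSpace ℝ E]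
    {A : Matrix ι ι ℝ} (hA : A.det ≠ 0) (f : (ι → ℝ) → E) :
    ∫ x, f (A *ᵥ x) = |A.det|⁻¹ • ∫ u, f u := by
  have hdet : LinearMap.det (toLin' A) ≠ 0 := by rwa [LinearMap.det_toLin']
  have hemb : MeasurableEmbedding (toLin' A) :=
    (toLin' A).continuous_of_finiteDimensional.measurableEmbedding
      (mulVec_injective_of_isUnit ((isUnit_iff_isUnit_det A).mpr hA.isUnit))
  simp_rw [← toLin'_apply]
  rw [← hemb.integral_map, Real.map_linearMap_volume_pi_eq_smul_volume_pi hdet,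
    integral_smul_measure, LinearMap.det_toLin', abs_inv, ENNReal.toReal_ofReal (by positivity)]

theorem integral_exp_neg_dotProduct_mulVec {M : Matrix ι ι ℝ} (hM : M.PosDef) :
    ∫ x : ι → ℝ, exp (-(x ⬝ᵥ M *ᵥ x)) =
      π ^ (Fintype.card ι / 2 : ℝ) * M.det ^ (-(1 : ℝ) / 2) := by
  set A := CFC.sqrt M
  have hA_symm : Aᵀ = A := by
    simpa using (CFC.sqrt_nonneg M).posSemidef.isHermitian.eq
  have hAA : A * A = M := CFC.sqrt_mul_sqrt_self M hM.posSemidef.nonneg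
  have hdet_sq : A.det ^ 2 = M.det := by rw [← hAA, det_mul, sq]
  have hdet : A.det ≠ 0 := fun h => hM.det_pos.ne' (by rw [← hdet_sq, h, sq, zero_mul])
  have hquad (x : ι → ℝ) : x ⬝ᵥ M *ᵥ x = A *ᵥ x ⬝ᵥ A *ᵥ x := by
    rw [← hAA, ← mulVec_mulVec, dotProduct_mulVec, ← vecMul_transpose, hA_symm]
  have habs : |A.det| = M.det ^ (1 / 2 : ℝ) := by
    rw [← sqrt_sq_eq_abs, hdet_sq, sqrt_eq_rpow]
  simp_rw [hquad]
  rw [integral_comp_mulVec hdet (fun u => exp (-(u ⬝ᵥ u))), integral_exp_neg_dotProduct_self,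
    habs, smul_eq_mul, ← rpow_neg hM.det_pos.le, mul_comm]
  ring_nf

theorem integral_exp_neg_dotProduct_mulVec_sub_add_div {M : Matrix ι ι ℝ} (hM : M.PosDef)
    (m : ι → ℝ) (c : ℝ) {t : ℝ} (ht : 0 < t) :
    ∫ x : ι → ℝ, exp (-((x - m) ⬝ᵥ M *ᵥ (x - m) + 2 * c) / (2 * t)) =
      (2 * π * t) ^ (Fintype.card ι / 2 : ℝ) * M.det ^ (-(1 : ℝ) / 2) * exp (-c / t) := by
  have hM' : ((2 * t)⁻¹ • M).PosDef := hM.smul (by positivity)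
  have hsplit (x : ι → ℝ) : exp (-((x - m) ⬝ᵥ M *ᵥ (x - m) + 2 * c) / (2 * t)) =
      exp (-((x - m) ⬝ᵥ ((2 * t)⁻¹ • M) *ᵥ (x - m))) * exp (-c / t) := by
    rw [← exp_add, smul_mulVec, dotProduct_smul, smul_eq_mul]
    congr 1
    field_simp
    ring
  simp_rw [hsplit]
  rw [integral_mul_const, integral_sub_right_eq_self (fun x => exp (-(x ⬝ᵥ ((2 * t)⁻¹ • M) *ᵥ x))),
    integral_exp_neg_dotProduct_mulVec hM', det_smul, mul_rpow (by positivity) hM.det_pos.le,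
    ← rpow_natCast, ← rpow_mul (by positivity), inv_rpow (by positivity),
    ← rpow_neg (by positivity), show 2 * π * t = π * (2 * t) by ring,
    mul_rpow pi_pos.le (by positivity)]
  ring_nf

end Gaussian

theorem integral_rpow_neg_sub_one_mul_exp_neg_div_Ioi {s c : ℝ} (hs : 0 < s) (hc : 0 < c) :
    ∫ v in Set.Ioi (0 : ℝ), v ^ (-s - 1) * exp (-c / v) = Gamma s / c ^ s := by
  -- the substitution `v = x⁻¹` turns this into Euler's integral for `Γ(s)`
  have hsubst : ∀ x ∈ Set.Ioi (0 : ℝ), x ^ (-s - 1) * exp (-c / x) =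
      (|(-1 : ℝ)| * x ^ ((-1 : ℝ) - 1)) • ((x ^ (-1 : ℝ)) ^ (s - 1) * exp (-(c * x ^ (-1 : ℝ)))) := by
    intro x hx
    rw [smul_eq_mul, abs_neg, abs_one, one_mul, ← rpow_mul (le_of_lt hx), ← mul_assoc,
      ← rpow_add hx, rpow_neg_one, ← div_eq_mul_inv, neg_div]
    ring_nf
  rw [setIntegral_congr_fun measurableSet_Ioi hsubst,
    integral_comp_rpow_Ioi (fun y => y ^ (s - 1) * exp (-(c * y))) (by norm_num : (-1 : ℝ) ≠ 0),
    integral_rpow_mul_exp_neg_mul_Ioi hs hc, div_rpow zero_le_one hc.le, one_rpow,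
    one_div_mul_eq_div]

namespace Matrix

theorem mulVec_injective_of_rank_eq_card {m n K : Type*} [Fintype n] [Field K]
    {A : Matrix m n K} (h : A.rank = Fintype.card n) : Function.Injective A.mulVec := by
  rw [mulVec_injective_iff, linearIndependent_iff_card_eq_finrank_span, ← h,
    rank_eq_finrank_span_cols]
  rfl

theorem PosDef.transpose_mul_mul_of_rank_eq_card {m n : Type*} [Fintype m] [Fintype n]
    {S : Matrix m m ℝ} (hS : S.PosDef) {X : Matrix m n ℝ} (hX : X.rank = Fintype.card n) :
    (Xᵀ * S * X).PosDef := by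
  simpa using hS.conjTranspose_mul_mul_same (mulVec_injective_of_rank_eq_card hX)

theorem dotProduct_mulVec_sub_eq_of_normal_eq {ι κ R : Type*} [Fintype ι] [Fintype κ]
    [CommRing R] {S : Matrix ι ι R} (hS : S.IsSymm) (X : Matrix ι κ R) (y : ι → R)
    {β₀ : κ → R} (hβ₀ : (Xᵀ * S * X) *ᵥ β₀ = (Xᵀ * S) *ᵥ y) (β : κ → R) :
    (y - X *ᵥ β) ⬝ᵥ S *ᵥ (y - X *ᵥ β) =
      (β - β₀) ⬝ᵥ (Xᵀ * S * X) *ᵥ (β - β₀) + (y ⬝ᵥ S *ᵥ y - β₀ ⬝ᵥ (Xᵀ * S * X) *ᵥ β₀) := by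
  have hsymm (u v : ι → R) : u ⬝ᵥ S *ᵥ v = v ⬝ᵥ S *ᵥ u := by
    rw [dotProduct_mulVec, ← mulVec_transpose, hS.eq, dotProduct_comm]
  have hpull (u : κ → R) (v : ι → R) : X *ᵥ u ⬝ᵥ S *ᵥ v = u ⬝ᵥ (Xᵀ * S) *ᵥ v := by
    rw [← mulVec_mulVec, dotProduct_mulVec u, vecMul_transpose, dotProduct_comm]
  have hgram (u v : κ → R) : X *ᵥ u ⬝ᵥ S *ᵥ (X *ᵥ v) = u ⬝ᵥ (Xᵀ * S * X) *ᵥ v := by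
    rw [hpull, ← mulVec_mulVec (M := Xᵀ * S)]
  have hcross : β ⬝ᵥ (Xᵀ * S * X) *ᵥ β₀ = β₀ ⬝ᵥ (Xᵀ * S * X) *ᵥ β := by
    rw [← hgram, ← hgram, hsymm]
  simp only [mulVec_sub, dotProduct_sub, sub_dotProduct, hgram, hpull, hsymm y (X *ᵥ β), ← hβ₀]
  rw [hcross]
  ring

end Matrix

theorem integral_gaussian_likelihood_mul_invGamma_density {n q : ℕ}
    {K : Matrix (Fin n) (Fin n) ℝ} (hK : K.PosDef) (P : Matrix (Fin n) (Fin q) ℝ) (y : Fin n → ℝ)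
    {G : Matrix (Fin q) (Fin q) ℝ} (hG : G.PosDef) {βhat : Fin q → ℝ} {w : ℝ}
    (hsq : ∀ β, (y - P *ᵥ β) ⬝ᵥ K⁻¹ *ᵥ (y - P *ᵥ β) = (β - βhat) ⬝ᵥ G *ᵥ (β - βhat) + 2 * w)
    (a b : ℝ) {v : ℝ} (hv : 0 < v) :
    ∫ β : Fin q → ℝ,
          (2 * π * v) ^ (-(n : ℝ) / 2) * K.det ^ (-(1 : ℝ) / 2) *
              exp (-((y - P *ᵥ β) ⬝ᵥ K⁻¹ *ᵥ (y - P *ᵥ β)) / (2 * v)) *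
            (b ^ a / Gamma a * v ^ (-a - 1) * exp (-b / v)) =
      (2 * π) ^ (-((n : ℝ) - q) / 2) * (G.det * K.det) ^ (-(1 : ℝ) / 2) * (b ^ a / Gamma a) *
        (v ^ (-(a + ((n : ℝ) - q) / 2) - 1) * exp (-(b + w) / v)) := by
  have h2π : (0 : ℝ) < 2 * π := by positivity
  simp_rw [hsq]
  rw [integral_mul_const, integral_const_mul,
    integral_exp_neg_dotProduct_mulVec_sub_add_div hG βhat w hv, Fintype.card_fin,
    mul_rpow hG.det_pos.le hK.det_pos.le, mul_rpow h2π.le hv.le, mul_rpow h2π.le hv.le,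
    show -(a + ((n : ℝ) - q) / 2) - 1 = -(n : ℝ) / 2 + q / 2 + (-a - 1) by ring,
    show -((n : ℝ) - q) / 2 = -(n : ℝ) / 2 + q / 2 by ring, rpow_add hv, rpow_add hv,
    rpow_add h2π, show -(b + w) / v = -w / v + -b / v by ring, exp_add]
  ring

/-- Marginal likelihood of the universal kriging model: integrating the
Gaussian likelihood against a flat prior on `β` and an inverse-Gamma `(a,b)` prior on `σ²`
gives `(2π)^{−(n−q)/2} det(G K)^{−1/2} (b^a/Γ(a)) Γ(a+(n−q)/2) / (b+w)^{a+(n−q)/2}`,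
where `w = (yᵀK⁻¹y − β̂ᵀGβ̂)/2`. -/
theorem marginal_likelihood_closed_form (n q : ℕ) (hnq : q < n)
    (K : Matrix (Fin n) (Fin n) ℝ) (hK : K.PosDef)
    (P : Matrix (Fin n) (Fin q) ℝ) (hP : P.rank = q)
    (y : Fin n → ℝ) (a b : ℝ) (ha : 0 < a) (hb : 0 < b)
    (G : Matrix (Fin q) (Fin q) ℝ) (hG : G = Pᵀ * K⁻¹ * P)
    (βhat : Fin q → ℝ) (hβhat : βhat = (G⁻¹ * Pᵀ * K⁻¹).mulVec y)
    (w : ℝ) (hw : w = (y ⬝ᵥ K⁻¹.mulVec y - βhat ⬝ᵥ G.mulVec βhat) / 2) :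
    (∫ v in Set.Ioi (0 : ℝ),
        ∫ β : Fin q → ℝ,
          (2 * Real.pi * v) ^ (-(n : ℝ) / 2) * K.det ^ (-(1 : ℝ) / 2) *
              Real.exp (-((y - P.mulVec β) ⬝ᵥ K⁻¹.mulVec (y - P.mulVec β)) / (2 * v)) *
            (b ^ a / Real.Gamma a * v ^ (-a - 1) * Real.exp (-b / v))) =
      (2 * Real.pi) ^ (-((n : ℝ) - q) / 2) * (G.det * K.det) ^ (-(1 : ℝ) / 2) *
        (b ^ a / Real.Gamma a) * Real.Gamma (a + ((n : ℝ) - q) / 2) /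
          (b + w) ^ (a + ((n : ℝ) - q) / 2) := by
  have hGpd : G.PosDef := hG ▸ hK.inv.transpose_mul_mul_of_rank_eq_card (by simpa using hP)
  have hnormal : G *ᵥ βhat = (Pᵀ * K⁻¹) *ᵥ y := by
    rw [hβhat, mulVec_mulVec, Matrix.mul_assoc,
      mul_nonsing_inv_cancel_left _ _ hGpd.det_pos.ne'.isUnit]
  have hsq (β : Fin q → ℝ) : (y - P *ᵥ β) ⬝ᵥ K⁻¹ *ᵥ (y - P *ᵥ β) =
      (β - βhat) ⬝ᵥ G *ᵥ (β - βhat) + 2 * w := by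
    have hKsymm : K⁻¹.IsSymm := by simpa [IsSymm] using hK.inv.isHermitian.eq
    rw [hw, mul_div_cancel₀ _ two_ne_zero, hG]
    exact dotProduct_mulVec_sub_eq_of_normal_eq hKsymm P y (hG ▸ hnormal) β
  have hw0 : 0 ≤ w := by
    have := hK.inv.posSemidef.dotProduct_mulVec_nonneg (y - P *ᵥ βhat)
    simp only [star_trivial, hsq, sub_self, mulVec_zero, dotProduct_zero, zero_add] at this
    linarith
  have hs : 0 < a + ((n : ℝ) - q) / 2 := by
    have : (q : ℝ) < n := by exact_mod_cast hnq
    linarith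
  rw [setIntegral_congr_fun measurableSet_Ioi fun v hv =>
      integral_gaussian_likelihood_mul_invGamma_density hK P y hGpd hsq a b hv,
    integral_const_mul, integral_rpow_neg_sub_one_mul_exp_neg_div_Ioi hs (by linarith),
    ← mul_div_assoc]
end

section
/- Fix a real number w>0 and a real number m>0 (in the paper, m=(n−q)/2 with integers n>q). Define p(a,b) = (b^a/Γ(a)) · Γ(a+m) / (b+w)^{a+m} for a>0, b>0. Then the supremum of p over (a,b)∈(0,∞)² is not attained: for every (a,b)∈(0,∞)² there exists (a′,b′)∈(0,∞)² with p(a′,b′) > p(a,b). In particular the empirical Bayes maximization of the marginal likelihood over the hyperparameters (a,b) has no finite maximizer. -/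
/-!
Both improvements come from the strict log-sum inequality, i.e. strict concavity of `log`.
For fixed `a` it shows that `b ↦ p(a,b)` has its unique maximum at `b = a w / m`, so any other
`b` can be improved. At `b = a w / m`, the relation `Γ(a+1) = a Γ(a)` together with the log-sum
inequality for the pairs `(a+1, a)` and `(m, m)` shows that the profiled value strictly increases
when `a` is replaced by `a + 1`.
-/

open Real

theorem log_sum_inequality_strict {x₁ x₂ y₁ y₂ : ℝ} (hx₁ : 0 < x₁) (hx₂ : 0 < x₂)
    (hy₁ : 0 < y₁) (hy₂ : 0 < y₂) (hne : x₁ * y₂ ≠ x₂ * y₁) :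
    (x₁ + x₂) * log ((x₁ + x₂) / (y₁ + y₂)) < x₁ * log (x₁ / y₁) + x₂ * log (x₂ / y₂) := by
  have hs : 0 < x₁ + x₂ := by positivity
  have hratio : y₁ / x₁ ≠ y₂ / x₂ := by
    rw [Ne, div_eq_div_iff hx₁.ne' hx₂.ne']
    contrapose! hne
    linarith
  have hconcave := strictConcaveOn_log_Ioi.2 (div_pos hy₁ hx₁) (div_pos hy₂ hx₂) hratio
    (div_pos hx₁ hs) (div_pos hx₂ hs) (by rw [← add_div, div_self hs.ne'])
  have hmean : x₁ / (x₁ + x₂) * (y₁ / x₁) + x₂ / (x₁ + x₂) * (y₂ / x₂) = (y₁ + y₂) / (x₁ + x₂) := by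
    field_simp
  simp only [smul_eq_mul, hmean] at hconcave
  simp only [← inv_div (y₁ + y₂), ← inv_div y₁, ← inv_div y₂, log_inv] at hconcave ⊢
  have := mul_lt_mul_of_pos_left hconcave hs
  field_simp at this
  linarith

noncomputable def marginalLikelihood (w m a b : ℝ) : ℝ :=
  b ^ a / Gamma a * Gamma (a + m) / (b + w) ^ (a + m)

section

variable {w m a b : ℝ}

theorem marginalLikelihood_pos (ha : 0 < a) (ham : 0 < a + m) (hb : 0 < b) (hbw : 0 < b + w) :
    0 < marginalLikelihood w m a b := by
  unfold marginalLikelihood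
  have := Gamma_pos_of_pos ha
  have := Gamma_pos_of_pos ham
  positivity

theorem log_marginalLikelihood (ha : 0 < a) (ham : 0 < a + m) (hb : 0 < b) (hbw : 0 < b + w) :
    log (marginalLikelihood w m a b) =
      log (Gamma (a + m)) - log (Gamma a) + a * log b - (a + m) * log (b + w) := by
  have hΓa := Gamma_pos_of_pos ha
  have hΓam := Gamma_pos_of_pos ham
  unfold marginalLikelihood
  rw [log_div (by positivity) (by positivity), log_mul (by positivity) hΓam.ne',
    log_div (by positivity) hΓa.ne', log_rpow hb, log_rpow hbw]
  ring

theorem log_marginalLikelihood_optimal (hw : 0 < w) (hm : 0 < m) (ha : 0 < a) :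
    log (marginalLikelihood w m a (a * w / m)) = log (Gamma (a + m)) - log (Gamma a)
      + a * log a + m * log m - (a + m) * log (a + m) - m * log w := by
  have hsum : a * w / m + w = (a + m) * w / m := by field_simp
  rw [log_marginalLikelihood ha (by positivity) (by positivity) (by positivity), hsum,
    log_div (by positivity) hm.ne', log_div (by positivity) hm.ne',
    log_mul ha.ne' hw.ne', log_mul (by positivity) hw.ne']
  ring

theorem marginalLikelihood_lt_optimal (hw : 0 < w) (hm : 0 < m) (ha : 0 < a) (hb : 0 < b)
    (hne : b ≠ a * w / m) :
    marginalLikelihood w m a b < marginalLikelihood w m a (a * w / m) := by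
  rw [← log_lt_log_iff (marginalLikelihood_pos ha (by positivity) hb (by positivity))
    (marginalLikelihood_pos ha (by positivity) (by positivity) (by positivity)),
    log_marginalLikelihood ha (by positivity) hb (by positivity),
    log_marginalLikelihood_optimal hw hm ha]
  have hlogsum := log_sum_inequality_strict ha hm hb hw (by
    contrapose! hne
    field_simp
    linarith)
  rw [log_div (by positivity) (by positivity), log_div ha.ne' hb.ne',
    log_div hm.ne' hw.ne'] at hlogsum
  linarith

theorem marginalLikelihood_optimal_lt_succ (hw : 0 < w) (hm : 0 < m) (ha : 0 < a) :
    marginalLikelihood w m a (a * w / m) < marginalLikelihood w m (a + 1) ((a + 1) * w / m) := by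
  rw [← log_lt_log_iff (marginalLikelihood_pos ha (by positivity) (by positivity) (by positivity))
    (marginalLikelihood_pos (by positivity) (by positivity) (by positivity) (by positivity)),
    log_marginalLikelihood_optimal hw hm ha, log_marginalLikelihood_optimal hw hm (by positivity),
    add_right_comm a 1 m, Gamma_add_one ha.ne', Gamma_add_one (by positivity),
    log_mul ha.ne' (Gamma_pos_of_pos ha).ne',
    log_mul (by positivity) (Gamma_pos_of_pos (by positivity)).ne']
  have hlogsum := log_sum_inequality_strict (by positivity : 0 < a + 1) hm ha hm (by
    rw [add_mul, one_mul, mul_comm]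
    exact (lt_add_of_pos_right _ hm).ne')
  rw [div_self hm.ne', log_one, add_right_comm, log_div (by positivity) (by positivity),
    log_div (by positivity) ha.ne'] at hlogsum
  linarith

end

/-- For fixed `w > 0` and `m > 0`, the (rescaled) marginal likelihood
`p(a,b) = (b^a/Γ(a)) Γ(a+m) / (b+w)^{a+m}` has no finite maximizer over `(0,∞)²`:
for every `(a,b)` there is `(a',b')` with a strictly larger value. -/
theorem empirical_bayes_unbounded (w m : ℝ) (hw : 0 < w) (hm : 0 < m)
    (p : ℝ → ℝ → ℝ)
    (hp : ∀ a b : ℝ, p a b =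
      b ^ a / Real.Gamma a * Real.Gamma (a + m) / (b + w) ^ (a + m)) :
    ∀ a b : ℝ, 0 < a → 0 < b →
      ∃ a' b' : ℝ, 0 < a' ∧ 0 < b' ∧ p a b < p a' b' := by
  obtain rfl : p = marginalLikelihood w m := funext₂ hp
  intro a b ha hb
  by_cases hopt : b = a * w / m
  · subst hopt
    exact ⟨a + 1, (a + 1) * w / m, by positivity, by positivity,
      marginalLikelihood_optimal_lt_succ hw hm ha⟩
  · exact ⟨a, a * w / m, ha, by positivity, marginalLikelihood_lt_optimal hw hm ha hb hopt⟩
end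

section
/- Fix a real number w>0 and let m = k/2 for an integer k ≥ 1. Define the profiled marginal likelihood ρ(a) = ((aw/m)^a/Γ(a)) · Γ(a+m) / (aw/m + w)^{a+m} for a>0. Then ρ is monotonically nondecreasing on (0,∞). -/
/-!
Put `G u = Γ(u) / u^u = ∫₀^∞ x^(u-1) e^(-u x) dx`. Substituting `b*(a) = a w / m` gives
`ρ(a) = (w/m)^(-m) · G(a+m) / G(a)`. Hölder's inequality applied to the integral shows that
`G` is log-convex, and the increment `log G(a+m) - log G(a)` of a convex function is
nondecreasing in `a`.
-/

open MeasureTheory Real Set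

namespace MeasureTheory

theorem integral_rpow_mul_rpow_le {α : Type*} [MeasurableSpace α] {μ : Measure α}
    {f g : α → ℝ}
    (hf0 : 0 ≤ᵐ[μ] f) (hg0 : 0 ≤ᵐ[μ] g) (hf : Integrable f μ) (hg : Integrable g μ)
    {p q : ℝ} (hp : 0 ≤ p) (hq : 0 ≤ q) (hpq : p + q = 1) :
    ∫ x, f x ^ p * g x ^ q ∂μ ≤ (∫ x, f x ∂μ) ^ p * (∫ x, g x ∂μ) ^ q := by
  have hfg0 : 0 ≤ᵐ[μ] fun x => f x ^ p * g x ^ q := by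
    filter_upwards [hf0, hg0] with x hfx hgx
    exact mul_nonneg (rpow_nonneg hfx p) (rpow_nonneg hgx q)
  have hfg : AEStronglyMeasurable (fun x => f x ^ p * g x ^ q) μ :=
    ((hf.1.aemeasurable.pow_const p).mul (hg.1.aemeasurable.pow_const q)).aestronglyMeasurable
  rw [integral_eq_lintegral_of_nonneg_ae hfg0 hfg, integral_eq_lintegral_of_nonneg_ae hf0 hf.1,
    integral_eq_lintegral_of_nonneg_ae hg0 hg.1, ENNReal.toReal_rpow, ENNReal.toReal_rpow,
    ← ENNReal.toReal_mul]
  refine ENNReal.toReal_mono (ENNReal.mul_ne_top ?_ ?_) ?_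
  · exact ENNReal.rpow_ne_top_of_nonneg hp
      ((lintegral_ofReal_ne_top_iff_integrable hf.1 hf0).2 hf)
  · exact ENNReal.rpow_ne_top_of_nonneg hq
      ((lintegral_ofReal_ne_top_iff_integrable hg.1 hg0).2 hg)
  calc ∫⁻ x, ENNReal.ofReal (f x ^ p * g x ^ q) ∂μ
      = ∫⁻ x, ENNReal.ofReal (f x) ^ p * ENNReal.ofReal (g x) ^ q ∂μ := by
        refine lintegral_congr_ae ?_
        filter_upwards [hf0, hg0] with x hfx hgx
        rw [ENNReal.ofReal_mul (rpow_nonneg hfx p), ENNReal.ofReal_rpow_of_nonneg hfx hp,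
          ENNReal.ofReal_rpow_of_nonneg hgx hq]
    _ ≤ _ := ENNReal.lintegral_mul_norm_pow_le hf.1.aemeasurable.ennreal_ofReal
        hg.1.aemeasurable.ennreal_ofReal hp hq hpq

end MeasureTheory

namespace Real

theorem integral_rpow_sub_one_mul_exp_neg_mul_self {u : ℝ} (hu : 0 < u) :
    ∫ x in Ioi 0, x ^ (u - 1) * exp (-(u * x)) = Gamma u / u ^ u := by
  rw [integral_rpow_mul_exp_neg_mul_Ioi hu hu, div_rpow zero_le_one hu.le, one_rpow,
    one_div_mul_eq_div]

theorem Gamma_div_rpow_self_mul_add_mul_le {s t a b : ℝ} (hs : 0 < s) (ht : 0 < t)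
    (ha : 0 ≤ a) (hb : 0 ≤ b) (hab : a + b = 1) :
    Gamma (a * s + b * t) / (a * s + b * t) ^ (a * s + b * t) ≤
      (Gamma s / s ^ s) ^ a * (Gamma t / t ^ t) ^ b := by
  have hst : 0 < a * s + b * t := by
    nlinarith [lt_min hs ht, min_le_left s t, min_le_right s t]
  have hint {u : ℝ} (hu : 0 < u) :
      IntegrableOn (fun x => x ^ (u - 1) * exp (-(u * x))) (Ioi 0) := by
    refine Integrable.of_integral_ne_zero ?_
    rw [integral_rpow_sub_one_mul_exp_neg_mul_self hu]
    positivity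
  have hnonneg (u : ℝ) :
      0 ≤ᵐ[volume.restrict (Ioi 0)] fun x => x ^ (u - 1) * exp (-(u * x)) :=
    ae_restrict_of_forall_mem measurableSet_Ioi fun x (hx : 0 < x) => by positivity
  rw [← integral_rpow_sub_one_mul_exp_neg_mul_self hs,
    ← integral_rpow_sub_one_mul_exp_neg_mul_self ht,
    ← integral_rpow_sub_one_mul_exp_neg_mul_self hst]
  refine le_of_eq_of_le (setIntegral_congr_fun measurableSet_Ioi fun x (hx : 0 < x) => ?_)
    (integral_rpow_mul_rpow_le (hnonneg s) (hnonneg t) (hint hs) (hint ht) ha hb hab)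
  rw [mul_rpow (by positivity) (by positivity), mul_rpow (by positivity) (by positivity),
    ← rpow_mul hx.le, ← rpow_mul hx.le, ← exp_mul, ← exp_mul, mul_mul_mul_comm, ← rpow_add hx,
    ← exp_add]
  congr 2
  · linear_combination hab
  · ring

theorem convexOn_log_Gamma_div_rpow_self :
    ConvexOn ℝ (Ioi 0) fun u => log (Gamma u / u ^ u) := by
  refine ⟨convex_Ioi 0, fun s (hs : 0 < s) t (ht : 0 < t) a b ha hb hab => ?_⟩
  have hpos {u : ℝ} (hu : 0 < u) : 0 < Gamma u / u ^ u := by positivity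
  simp only [smul_eq_mul]
  rw [← log_rpow (hpos hs), ← log_rpow (hpos ht), ← log_mul (by positivity) (by positivity)]
  exact log_le_log (hpos ((convex_Ioi (0 : ℝ)) hs ht ha hb hab))
    (Gamma_div_rpow_self_mul_add_mul_le hs ht ha hb hab)

end Real

theorem ConvexOn.monotoneOn_sub_comp_add {𝕜 : Type*} [Field 𝕜] [LinearOrder 𝕜]
    [IsStrictOrderedRing 𝕜] {s : Set 𝕜} {f : 𝕜 → 𝕜} (hf : ConvexOn 𝕜 s f) {h : 𝕜}
    (hh : 0 < h)
    (hs : ∀ x ∈ s, x + h ∈ s) : MonotoneOn (fun x => f (x + h) - f x) s := by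
  intro x hx y hy hxy
  have hslope : slope f x (x + h) ≤ slope f y (y + h) :=
    calc slope f x (x + h) ≤ slope f x (y + h) := by
          refine hf.slope_mono hx ⟨hs x hx, ?_⟩ ⟨hs y hy, ?_⟩ (by linarith) <;>
            exact fun e => by linarith [mem_singleton_iff.mp e]
      _ = slope f (y + h) x := slope_comm f x (y + h)
      _ ≤ slope f (y + h) y := by
          refine hf.slope_mono (hs y hy) ⟨hx, ?_⟩ ⟨hy, ?_⟩ hxy <;>
            exact fun e => by linarith [mem_singleton_iff.mp e]
      _ = slope f y (y + h) := slope_comm f _ _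
  rw [slope_def_field, slope_def_field, add_sub_cancel_left, add_sub_cancel_left] at hslope
  exact div_le_div_iff_of_pos_right hh |>.mp hslope

noncomputable def profiledMarginalLikelihood (w m a : ℝ) : ℝ :=
  (a * w / m) ^ a / Gamma a * Gamma (a + m) / (a * w / m + w) ^ (a + m)

theorem profiledMarginalLikelihood_eq {w m a : ℝ} (hw : 0 < w) (hm : 0 < m) (ha : 0 < a) :
    profiledMarginalLikelihood w m a = (w / m) ^ (-m) *
      exp (log (Gamma (a + m) / (a + m) ^ (a + m)) - log (Gamma a / a ^ a)) := by
  have ham : 0 < a + m := by positivity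
  have hc : 0 < w / m := by positivity
  rw [exp_sub, exp_log (by positivity), exp_log (by positivity), profiledMarginalLikelihood,
    show a * w / m = a * (w / m) by ring, show a * (w / m) + w = (a + m) * (w / m) by field_simp,
    mul_rpow ha.le hc.le, mul_rpow ham.le hc.le,
    show (w / m) ^ a = (w / m) ^ (a + m) * (w / m) ^ (-m) by rw [← rpow_add hc]; ring_nf]
  have : (w / m) ^ (a + m) ≠ 0 := by positivity
  have : (a + m) ^ (a + m) ≠ 0 := by positivity
  have : a ^ a ≠ 0 := by positivity
  have : Gamma a ≠ 0 := by positivity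
  field_simp

theorem monotoneOn_profiledMarginalLikelihood {w m : ℝ} (hw : 0 < w) (hm : 0 < m) :
    MonotoneOn (profiledMarginalLikelihood w m) (Ioi 0) := by
  have hinc := convexOn_log_Gamma_div_rpow_self.monotoneOn_sub_comp_add hm
    fun x (hx : 0 < x) => show 0 < x + m by positivity
  intro a (ha : 0 < a) b (hb : 0 < b) hab
  rw [profiledMarginalLikelihood_eq hw hm ha, profiledMarginalLikelihood_eq hw hm hb]
  exact mul_le_mul_of_nonneg_left (exp_le_exp.mpr (hinc ha hb hab)) (by positivity)

/-- For `w > 0` and `m = k/2` with `k ≥ 1` an integer, the profiled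
marginal likelihood `ρ(a) = ((aw/m)^a/Γ(a)) Γ(a+m) / (aw/m + w)^{a+m}` is
monotonically nondecreasing on `(0,∞)`. -/
theorem profiled_marginal_likelihood_monotone (w : ℝ) (hw : 0 < w)
    (k : ℕ) (hk : 1 ≤ k) (m : ℝ) (hm : m = (k : ℝ) / 2)
    (ρ : ℝ → ℝ)
    (hρ : ∀ a : ℝ, ρ a =
      (a * w / m) ^ a / Real.Gamma a * Real.Gamma (a + m) / (a * w / m + w) ^ (a + m)) :
    MonotoneOn ρ (Set.Ioi (0 : ℝ)) := by
  have hm0 : 0 < m := by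
    rw [hm]
    exact div_pos (Nat.cast_pos.mpr hk) two_pos
  rw [show ρ = profiledMarginalLikelihood w m from funext hρ]
  exact monotoneOn_profiledMarginalLikelihood hw hm0
end

section
/- Fix a real number w>0, m = k/2 for an integer k ≥ 1, and hyperprior parameters ζ>0, ι>0. Define the MMAP objective p̃(a,b) = (b^a/Γ(a)) · Γ(a+m)/(b+w)^{a+m} · a^{ζ−1} e^{−ι a} for (a,b)∈(0,∞)². Then the supremum of p̃ over (0,∞)² is finite and is attained at some point (a*,b*) with 0 < a* < ∞ and 0 < b* < ∞. -/
/-!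
Write `p̃(a, b) = S(a, b) · F(a)` with `S(a, b) = b ^ a / (b + w) ^ (a + m)` and
`F(a) = Γ(a + m) / Γ(a) · a ^ (ζ - 1) · exp (-ι a)`. For fixed `a`, Bernoulli's inequality with
exponent `a / (a + m)` shows that `S(a, ·)` is maximal at `b = a w / m`, so it suffices to maximise
the profile `g(a) = S(a, a w / m) · F(a)` over `a > 0`. As `S ≤ w ^ (-m)`, the profile is squeezed
by `F`, which vanishes at `0⁺` (there `Γ(a) ~ 1 / a` and `ζ > 0`) and at `∞` (there
`Γ(a + m) / Γ(a)` grows only polynomially). A continuous positive function on `(0, ∞)` vanishing at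
both ends attains its supremum.
-/

open Real Set Filter Topology

theorem ContinuousOn.exists_isMaxOn_Ioi_of_tendsto {f : ℝ → ℝ} {a c x₀ : ℝ}
    (hf : ContinuousOn f (Ioi a)) (hx₀ : a < x₀) (hc : c < f x₀)
    (h_right : Tendsto f (𝓝[>] a) (𝓝 c)) (h_top : Tendsto f atTop (𝓝 c)) :
    ∃ x ∈ Ioi a, IsMaxOn f (Ioi a) x := by
  obtain ⟨lo, hlo, h_near⟩ := (mem_nhdsGT_iff_exists_Ioo_subset' hx₀).1
    (h_right.eventually_lt_const hc)
  obtain ⟨hi, h_far⟩ := eventually_atTop.1 (h_top.eventually_lt_const hc)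
  set K := Icc (min lo x₀) (max hi x₀)
  have hKa : K ⊆ Ioi a := fun y hy => lt_of_lt_of_le (lt_min hlo hx₀) hy.1
  obtain ⟨x, hxK, hx_max⟩ := isCompact_Icc.exists_isMaxOn
    ⟨x₀, min_le_right _ _, le_max_right _ _⟩ (hf.mono hKa)
  have hx₀x : f x₀ ≤ f x := hx_max ⟨min_le_right _ _, le_max_right _ _⟩
  refine ⟨x, hKa hxK, fun y (hy : a < y) => ?_⟩
  rcases lt_or_ge y (min lo x₀) with hy_lo | hy_lo
  · exact ((h_near ⟨hy, hy_lo.trans_le (min_le_left _ _)⟩).trans_le hx₀x).le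
  rcases le_or_gt y (max hi x₀) with hy_hi | hy_hi
  · exact hx_max ⟨hy_lo, hy_hi⟩
  · exact ((h_far y ((le_max_left _ _).trans hy_hi.le)).trans_le hx₀x).le

theorem Real.continuousAt_Gamma_of_pos {s : ℝ} (hs : 0 < s) : ContinuousAt Gamma s :=
  differentiableOn_Gamma_Ioi.continuousOn.continuousAt (Ioi_mem_nhds hs)

theorem Real.Gamma_add_nat_le {a : ℝ} (ha : 0 < a) (n : ℕ) :
    Gamma (a + n) ≤ Gamma a * (a + n) ^ n := by
  induction n with
  | zero => simp
  | succ n ih =>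
    have han : 0 < a + n := by positivity
    calc Gamma (a + (n + 1 : ℕ)) = (a + n) * Gamma (a + n) := by
          rw [Nat.cast_succ, ← add_assoc, Gamma_add_one han.ne']
      _ ≤ (a + n) * (Gamma a * (a + n) ^ n) := by gcongr
      _ ≤ (a + (n + 1 : ℕ)) * (Gamma a * (a + (n + 1 : ℕ)) ^ n) := by
          have hΓ := (Gamma_pos_of_pos ha).le
          gcongr <;> simp
      _ = Gamma a * (a + (n + 1 : ℕ)) ^ (n + 1) := by ring

theorem Real.Gamma_add_le_of_two_le {a m : ℝ} (ha : 2 ≤ a) (hm : 0 ≤ m) {n : ℕ} (hmn : m ≤ n) :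
    Gamma (a + m) ≤ Gamma a * (a + n) ^ n :=
  (Gamma_strictMonoOn_Ici.monotoneOn (by simp; linarith) (by simp; linarith)
    (by linarith)).trans (Gamma_add_nat_le (by linarith) n)

noncomputable def shapeFactor (m ζ ι a : ℝ) : ℝ :=
  Gamma (a + m) / Gamma a * a ^ (ζ - 1) * exp (-ι * a)

section shapeFactor

variable {m ζ ι : ℝ}

theorem shapeFactor_pos (hm : 0 ≤ m) {a : ℝ} (ha : 0 < a) : 0 < shapeFactor m ζ ι a := by
  have : 0 < a + m := by linarith
  unfold shapeFactor
  positivity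

theorem continuousOn_shapeFactor (hm : 0 ≤ m) : ContinuousOn (shapeFactor m ζ ι) (Ioi 0) := by
  intro a (ha : 0 < a)
  refine ContinuousAt.continuousWithinAt ?_
  unfold shapeFactor
  have hΓ : ContinuousAt (fun a => Gamma (a + m)) a :=
    (continuousAt_Gamma_of_pos (add_pos_of_pos_of_nonneg ha hm)).comp (f := (· + m))
      (by fun_prop)
  exact ((hΓ.div (continuousAt_Gamma_of_pos ha) (Gamma_pos_of_pos ha).ne').mul
    (continuousAt_id.rpow_const (Or.inl ha.ne'))).mul (by fun_prop)

theorem tendsto_shapeFactor_nhdsGT_zero (hm : 0 < m) (hζ : 0 < ζ) :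
    Tendsto (shapeFactor m ζ ι) (𝓝[>] 0) (𝓝 0) := by
  have h_eq : ∀ a ∈ Ioi (0 : ℝ),
      Gamma (a + m) / Gamma (a + 1) * a ^ ζ * exp (-ι * a) = shapeFactor m ζ ι a := by
    intro a (ha : 0 < a)
    rw [shapeFactor, Gamma_add_one ha.ne', rpow_sub_one ha.ne']
    field_simp
  have h_ratio : ContinuousAt (fun a => Gamma (a + m) / Gamma (a + 1)) 0 :=
    ((continuousAt_Gamma_of_pos (by simpa using hm)).comp (f := (· + m)) (by fun_prop)).div
      ((continuousAt_Gamma_of_pos (by simp)).comp (f := (· + 1)) (by fun_prop)) (by simp)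
  have h_pow : Tendsto (fun a : ℝ => a ^ ζ) (𝓝 0) (𝓝 0) := by
    simpa [zero_rpow hζ.ne'] using
      (continuousAt_id.rpow_const (x := (0 : ℝ)) (Or.inr hζ.le)).tendsto
  have h_exp : Tendsto (fun a => exp (-ι * a)) (𝓝 0) (𝓝 1) := by
    simpa using (by fun_prop : Continuous fun a => exp (-ι * a)).tendsto 0
  refine tendsto_nhdsWithin_congr h_eq (Tendsto.mono_left ?_ nhdsWithin_le_nhds)
  simpa using (h_ratio.tendsto.mul h_pow).mul h_exp

theorem tendsto_shapeFactor_atTop (hm : 0 ≤ m) (hι : 0 < ι) :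
    Tendsto (shapeFactor m ζ ι) atTop (𝓝 0) := by
  obtain ⟨n, hmn⟩ := exists_nat_ge m
  have h_dom := (tendsto_rpow_mul_exp_neg_mul_atTop_nhds_zero (n + ζ - 1) ι hι).const_mul
    (2 ^ n)
  rw [mul_zero] at h_dom
  refine tendsto_of_tendsto_of_tendsto_of_le_of_le' tendsto_const_nhds h_dom
    ((eventually_gt_atTop 0).mono fun a ha => (shapeFactor_pos hm ha).le) ?_
  filter_upwards [eventually_ge_atTop (max 2 (n : ℝ))] with a ha
  have ha2 : 2 ≤ a := (le_max_left _ _).trans ha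
  have hΓ := Gamma_pos_of_pos (by linarith : 0 < a)
  have h_ratio : Gamma (a + m) / Gamma a ≤ 2 ^ n * a ^ (n : ℝ) := by
    rw [div_le_iff₀ hΓ, rpow_natCast, ← mul_pow]
    refine (Gamma_add_le_of_two_le ha2 hm hmn).trans ?_
    rw [mul_comm]
    gcongr
    linarith [(le_max_right _ _).trans ha]
  calc shapeFactor m ζ ι a ≤ 2 ^ n * a ^ (n : ℝ) * a ^ (ζ - 1) * exp (-ι * a) := by
        unfold shapeFactor; gcongr
    _ = 2 ^ n * (a ^ (n + ζ - 1) * exp (-ι * a)) := by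
        rw [add_sub_assoc, rpow_add (by linarith)]; ring

end shapeFactor

noncomputable def scaleFactor (w m a b : ℝ) : ℝ :=
  b ^ a / (b + w) ^ (a + m)

section scaleFactor

variable {w m a b : ℝ}

theorem scaleFactor_pos (hw : 0 < w) (hb : 0 < b) : 0 < scaleFactor w m a b := by
  unfold scaleFactor
  have : 0 < b + w := by linarith
  positivity

theorem scaleFactor_le_inv_rpow (hw : 0 < w) (hm : 0 ≤ m) (ha : 0 ≤ a) (hb : 0 ≤ b) :
    scaleFactor w m a b ≤ (w ^ m)⁻¹ := by
  have hbw : 0 < b + w := by linarith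
  rw [scaleFactor, rpow_add hbw, ← div_div, ← one_div]
  calc b ^ a / (b + w) ^ a / (b + w) ^ m ≤ 1 / (b + w) ^ m := by
        gcongr
        exact div_le_one_of_le₀ (rpow_le_rpow hb (by linarith) ha) (by positivity)
    _ ≤ 1 / w ^ m := by gcongr; linarith

theorem scaleFactor_le_scaleFactor_optimal (hw : 0 < w) (hm : 0 < m) (ha : 0 < a) (hb : 0 < b) :
    scaleFactor w m a b ≤ scaleFactor w m a (a * w / m) := by
  have hb₀ : 0 < a * w / m := by positivity
  have hb₀m : a * w / m * m = a * w := div_mul_cancel₀ _ hm.ne'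
  generalize a * w / m = b₀ at hb₀ hb₀m ⊢
  have h_bernoulli : (b / b₀) ^ (a / (a + m)) ≤ (b + w) / (b₀ + w) := by
    have := rpow_one_add_le_one_add_mul_self (s := b / b₀ - 1) (by linarith [div_pos hb hb₀])
      (p := a / (a + m)) (by positivity) (div_le_one_of_le₀ (by linarith) (by positivity))
    rw [add_sub_cancel] at this
    refine this.trans_eq ?_
    field_simp
    linear_combination (b₀ - b) * hb₀m
  have h_pow : (b / b₀) ^ a ≤ ((b + w) / (b₀ + w)) ^ (a + m) :=
    calc (b / b₀) ^ a = ((b / b₀) ^ (a / (a + m))) ^ (a + m) := by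
          rw [← rpow_mul (by positivity), div_mul_cancel₀ _ (by positivity)]
      _ ≤ ((b + w) / (b₀ + w)) ^ (a + m) := by gcongr
  rw [div_rpow hb.le hb₀.le, div_rpow (by positivity) (by positivity),
    div_le_div_iff₀ (by positivity) (by positivity)] at h_pow
  rw [scaleFactor, scaleFactor, div_le_div_iff₀ (by positivity) (by positivity)]
  linarith

theorem continuousOn_scaleFactor_optimal (hw : 0 < w) (hm : 0 < m) :
    ContinuousOn (fun a => scaleFactor w m a (a * w / m)) (Ioi 0) := by
  intro a (ha : 0 < a)
  refine ContinuousAt.continuousWithinAt ?_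
  unfold scaleFactor
  have hb₀ : 0 < a * w / m := by positivity
  have hb₀w : 0 < a * w / m + w := by positivity
  exact (ContinuousAt.rpow (f := fun a => a * w / m) (by fun_prop) continuousAt_id
    (Or.inl hb₀.ne')).div (ContinuousAt.rpow (f := fun a => a * w / m + w) (g := (· + m))
    (by fun_prop) (by fun_prop) (Or.inl hb₀w.ne')) (rpow_pos_of_pos hb₀w _).ne'

end scaleFactor

noncomputable def profileObjective (w m ζ ι a : ℝ) : ℝ :=
  scaleFactor w m a (a * w / m) * shapeFactor m ζ ι a

section profileObjective

variable {w m ζ ι : ℝ}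

theorem profileObjective_pos (hw : 0 < w) (hm : 0 < m) {a : ℝ} (ha : 0 < a) :
    0 < profileObjective w m ζ ι a :=
  mul_pos (scaleFactor_pos hw (by positivity)) (shapeFactor_pos hm.le ha)

theorem continuousOn_profileObjective (hw : 0 < w) (hm : 0 < m) :
    ContinuousOn (profileObjective w m ζ ι) (Ioi 0) :=
  (continuousOn_scaleFactor_optimal hw hm).mul (continuousOn_shapeFactor hm.le)

theorem tendsto_profileObjective_of_tendsto_shapeFactor (hw : 0 < w) (hm : 0 < m)
    {l : Filter ℝ} (hl : ∀ᶠ a in l, 0 < a) (h : Tendsto (shapeFactor m ζ ι) l (𝓝 0)) :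
    Tendsto (profileObjective w m ζ ι) l (𝓝 0) := by
  refine tendsto_of_tendsto_of_tendsto_of_le_of_le' tendsto_const_nhds
    (by simpa using h.const_mul (w ^ m)⁻¹) (hl.mono fun a ha => (profileObjective_pos hw hm ha).le)
    (hl.mono fun a ha => ?_)
  have hb₀ : 0 ≤ a * w / m := by positivity
  exact mul_le_mul_of_nonneg_right (scaleFactor_le_inv_rpow hw hm.le ha.le hb₀)
    (shapeFactor_pos hm.le ha).le

end profileObjective

/-- For `w > 0`, `m = k/2` with integer `k ≥ 1`, and hyperprior
parameters `ζ > 0`, `ι > 0`, the MMAP objective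
`p̃(a,b) = (b^a/Γ(a)) Γ(a+m)/(b+w)^{a+m} · a^{ζ−1} e^{−ιa}`
attains its (finite) supremum over `(0,∞)²` at some interior point `(a*, b*)`. -/
theorem mmap_finite_maximizer (w : ℝ) (hw : 0 < w)
    (k : ℕ) (hk : 1 ≤ k) (m : ℝ) (hm : m = (k : ℝ) / 2)
    (ζ ι : ℝ) (hζ : 0 < ζ) (hι : 0 < ι)
    (ptilde : ℝ → ℝ → ℝ)
    (hp : ∀ a b : ℝ, ptilde a b =
      b ^ a / Real.Gamma a * Real.Gamma (a + m) / (b + w) ^ (a + m) *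
        a ^ (ζ - 1) * Real.exp (-ι * a)) :
    ∃ astar bstar : ℝ, 0 < astar ∧ 0 < bstar ∧
      ∀ a b : ℝ, 0 < a → 0 < b → ptilde a b ≤ ptilde astar bstar := by
  have hm0 : 0 < m := by
    rw [hm]
    exact div_pos (by exact_mod_cast hk) two_pos
  have hp_factor : ∀ a b, ptilde a b = scaleFactor w m a b * shapeFactor m ζ ι a := by
    intro a b
    rw [hp, scaleFactor, shapeFactor]
    ring
  obtain ⟨astar, hastar, hmax⟩ :=
    (continuousOn_profileObjective (ζ := ζ) (ι := ι) hw hm0).exists_isMaxOn_Ioi_of_tendsto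
      one_pos (profileObjective_pos hw hm0 one_pos)
      (tendsto_profileObjective_of_tendsto_shapeFactor hw hm0 self_mem_nhdsWithin
        (tendsto_shapeFactor_nhdsGT_zero hm0 hζ))
      (tendsto_profileObjective_of_tendsto_shapeFactor hw hm0 (eventually_gt_atTop 0)
        (tendsto_shapeFactor_atTop hm0.le hι))
  refine ⟨astar, astar * w / m, hastar, div_pos (mul_pos hastar hw) hm0, fun a b ha hb => ?_⟩
  rw [hp_factor, hp_factor]
  calc scaleFactor w m a b * shapeFactor m ζ ι a ≤ profileObjective w m ζ ι a :=
        mul_le_mul_of_nonneg_right (scaleFactor_le_scaleFactor_optimal hw hm0 ha hb)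
          (shapeFactor_pos hm0.le ha).le
    _ ≤ profileObjective w m ζ ι astar := hmax ha
end

section
/- Let ν>2, σ>0 and μ, y*∈ℝ. Let g be the non-standardized Student-t density with ν degrees of freedom, location μ, and scale σ: g(t) = Γ((ν+1)/2)/(σ√(νπ)Γ(ν/2)) · (1+(t−μ)²/(νσ²))^{−(ν+1)/2}. Set I = y* − μ and m = √(ν/(ν−2)). Then the expected improvement under g has the closed form ∫_ℝ max(y*−t, 0) · g(t) dt = I·Φ_ν(I/σ) + m·σ·φ_{ν−2}(I/(mσ)), where φ_ν and Φ_ν denote respectively the standard Student-t density with ν degrees of freedom and its cumulative distribution function. -/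
open MeasureTheory

/-- The standard Student-t density with `ν` degrees of freedom. -/
noncomputable def tpdf (ν x : ℝ) : ℝ :=
  Real.Gamma ((ν + 1) / 2) / (Real.sqrt (ν * Real.pi) * Real.Gamma (ν / 2)) *
    (1 + x ^ 2 / ν) ^ (-((ν + 1) / 2))

/-- The cumulative distribution function of the standard Student-t distribution
with `ν` degrees of freedom. -/
noncomputable def tcdf (ν x : ℝ) : ℝ := ∫ t in Set.Iic x, tpdf ν t

/-- The non-standardized Student-t density with `ν` degrees of freedom,
location `μ` and scale `σ`. -/
noncomputable def studentDensity (ν μ σ t : ℝ) : ℝ :=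
  Real.Gamma ((ν + 1) / 2) / (σ * Real.sqrt (ν * Real.pi) * Real.Gamma (ν / 2)) *
    (1 + (t - μ) ^ 2 / (ν * σ ^ 2)) ^ (-((ν + 1) / 2))

/-!
The substitution `t = μ + σ x` turns the integral into `σ ∫ (a - x)₊ φ_ν(x) dx` with
`a = I / σ`, and on `(-∞, a]` the integrand is `a φ_ν(x) - x φ_ν(x)`. The first part
integrates to `a Φ_ν(a)`. For the second, with `c_ν = tpdfConst ν` the normalising constant,
`-x φ_ν(x)` is the derivative of `ν / (ν - 1) · c_ν · (1 + x² / ν) ^ (-(ν - 1) / 2)`, which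
vanishes at `-∞` and, by `Γ(s + 1) = s Γ(s)`, equals `m φ_{ν-2}(x / m)`.
-/

open Real Filter Set

noncomputable def tpdfConst (ν : ℝ) : ℝ :=
  Gamma ((ν + 1) / 2) / (√(ν * π) * Gamma (ν / 2))

lemma tpdf_eq (ν x : ℝ) : tpdf ν x = tpdfConst ν * (1 + x ^ 2 / ν) ^ (-((ν + 1) / 2)) := rfl

lemma tpdfConst_pos {ν : ℝ} (hν : 0 < ν) : 0 < tpdfConst ν := by
  have := Gamma_pos_of_pos (by linarith : 0 < (ν + 1) / 2)
  have := Gamma_pos_of_pos (by linarith : 0 < ν / 2)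
  unfold tpdfConst
  positivity

lemma integrable_one_add_sq_div_rpow {ν r : ℝ} (hν : 0 < ν) (hr : 1 < r) :
    Integrable fun x : ℝ => (1 + x ^ 2 / ν) ^ (-r / 2) := by
  have h := (integrable_rpow_neg_one_add_norm_sq (E := ℝ) (μ := volume)
    (by simpa using hr)).comp_div (sqrt_pos.2 hν).ne'
  refine h.congr (Eventually.of_forall fun x => ?_)
  simp [div_pow, sq_sqrt hν.le]

lemma integrable_tpdf {ν : ℝ} (hν : 0 < ν) : Integrable (tpdf ν) := by
  rw [show tpdf ν = _ from funext (tpdf_eq ν)]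
  simpa only [neg_div] using
    (integrable_one_add_sq_div_rpow hν (by linarith : 1 < ν + 1)).const_mul (tpdfConst ν)

lemma tpdf_nonneg {ν : ℝ} (hν : 0 < ν) (x : ℝ) : 0 ≤ tpdf ν x := by
  rw [tpdf_eq]; have := tpdfConst_pos hν; positivity

lemma abs_mul_tpdf_le {ν : ℝ} (hν : 0 < ν) (x : ℝ) :
    |x| * tpdf ν x ≤ tpdfConst ν * √ν * (1 + x ^ 2 / ν) ^ (-ν / 2) := by
  set b := 1 + x ^ 2 / ν
  have hb : 0 < b := by positivity
  have habs : |x| ≤ √ν * b ^ (1 / 2 : ℝ) := by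
    rw [← sqrt_eq_rpow, ← sqrt_mul hν.le, ← sqrt_sq_eq_abs]
    exact sqrt_le_sqrt (by rw [mul_add, mul_div_cancel₀ _ hν.ne']; linarith)
  calc |x| * tpdf ν x ≤ √ν * b ^ (1 / 2 : ℝ) * tpdf ν x :=
        mul_le_mul_of_nonneg_right habs (tpdf_nonneg hν x)
    _ = tpdfConst ν * √ν * (b ^ (1 / 2 : ℝ) * b ^ (-((ν + 1) / 2))) := by rw [tpdf_eq]; ring
    _ = tpdfConst ν * √ν * b ^ (-ν / 2) := by rw [← rpow_add hb]; ring_nf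

lemma integrable_mul_tpdf {ν : ℝ} (hν : 1 < ν) : Integrable fun x => x * tpdf ν x := by
  have hν0 : 0 < ν := by linarith
  refine ((integrable_one_add_sq_div_rpow hν0 hν).const_mul (tpdfConst ν * √ν)).mono'
    (continuous_id.mul ?_).aestronglyMeasurable (Eventually.of_forall fun x => ?_)
  · exact continuous_const.mul ((by fun_prop : Continuous fun x : ℝ => 1 + x ^ 2 / ν).rpow_const
      fun x => Or.inl (by positivity))
  · rw [norm_mul, norm_eq_abs, norm_of_nonneg (tpdf_nonneg hν0 x)]
    exact abs_mul_tpdf_le hν0 x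

lemma hasDerivAt_one_add_sq_div_rpow {ν : ℝ} (hν : 1 < ν) (x : ℝ) :
    HasDerivAt (fun x => ν / (ν - 1) * tpdfConst ν * (1 + x ^ 2 / ν) ^ (-((ν - 1) / 2)))
      (-(x * tpdf ν x)) x := by
  have hν0 : 0 < ν := by linarith
  have hbase : HasDerivAt (fun x : ℝ => 1 + x ^ 2 / ν) (2 * x / ν) x := by
    simpa using ((hasDerivAt_pow 2 x).div_const ν).const_add 1
  refine ((hbase.rpow_const (Or.inl (by positivity))).const_mul _).congr_deriv ?_
  rw [tpdf_eq, show -((ν - 1) / 2) - 1 = -((ν + 1) / 2) by ring]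
  field_simp [(by linarith : ν - 1 ≠ 0)]

lemma tendsto_one_add_sq_div_rpow_atBot {ν : ℝ} (hν : 1 < ν) (c : ℝ) :
    Tendsto (fun x => c * (1 + x ^ 2 / ν) ^ (-((ν - 1) / 2))) atBot (nhds 0) := by
  have hsq : Tendsto (fun x : ℝ => x ^ 2) atBot atTop :=
    ((tendsto_pow_atTop two_ne_zero).comp tendsto_neg_atBot_atTop).congr neg_sq
  have hbase : Tendsto (fun x : ℝ => 1 + x ^ 2 / ν) atBot atTop :=
    tendsto_atTop_add_const_left _ _ (hsq.atTop_div_const (by linarith))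
  simpa using ((tendsto_rpow_neg_atTop (by linarith : 0 < (ν - 1) / 2)).comp hbase).const_mul c

lemma setIntegral_Iic_mul_tpdf {ν : ℝ} (hν : 1 < ν) (a : ℝ) :
    ∫ x in Iic a, x * tpdf ν x
      = -(ν / (ν - 1) * tpdfConst ν * (1 + a ^ 2 / ν) ^ (-((ν - 1) / 2))) := by
  have h := integral_Iic_of_hasDerivAt_of_tendsto' (a := a)
    (fun x _ => hasDerivAt_one_add_sq_div_rpow hν x) (integrable_mul_tpdf hν).integrableOn.neg
    (tendsto_one_add_sq_div_rpow_atBot hν _)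
  rw [integral_neg, sub_zero] at h
  rw [← h, neg_neg]

lemma sqrt_mul_tpdfConst_sub_two {ν : ℝ} (hν : 2 < ν) :
    √(ν / (ν - 2)) * tpdfConst (ν - 2) = ν / (ν - 1) * tpdfConst ν := by
  set s := √(ν / (ν - 2))
  have hs : s ^ 2 = ν / (ν - 2) := sq_sqrt (div_nonneg (by linarith) (by linarith))
  have hsqrt : √(ν * π) = √((ν - 2) * π) * s := by
    rw [← sqrt_mul (by nlinarith [pi_pos])]
    congr 1
    field_simp [(by linarith : ν - 2 ≠ 0)]
  have hΓ₁ : Gamma ((ν + 1) / 2) = (ν - 1) / 2 * Gamma ((ν - 1) / 2) := by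
    rw [show (ν + 1) / 2 = (ν - 1) / 2 + 1 by ring, Gamma_add_one (by linarith)]
  have hΓ₂ : Gamma (ν / 2) = (ν - 2) / 2 * Gamma ((ν - 2) / 2) := by
    rw [show ν / 2 = (ν - 2) / 2 + 1 by ring, Gamma_add_one (by linarith)]
  have : 0 < s := sqrt_pos.2 (div_pos (by linarith) (by linarith))
  have : 0 < √((ν - 2) * π) := sqrt_pos.2 (mul_pos (by linarith) pi_pos)
  have : 0 < Gamma ((ν - 2) / 2) := Gamma_pos_of_pos (by linarith)
  unfold tpdfConst
  rw [hΓ₁, hΓ₂, hsqrt, show ν - 2 + 1 = ν - 1 by ring]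
  have : ν - 1 ≠ 0 := by linarith
  have : ν - 2 ≠ 0 := by linarith
  field_simp
  rw [hs]
  field_simp

lemma sqrt_mul_tpdf_sub_two {ν : ℝ} (hν : 2 < ν) (x : ℝ) :
    √(ν / (ν - 2)) * tpdf (ν - 2) (x / √(ν / (ν - 2)))
      = ν / (ν - 1) * tpdfConst ν * (1 + x ^ 2 / ν) ^ (-((ν - 1) / 2)) := by
  have hbase : 1 + (x / √(ν / (ν - 2))) ^ 2 / (ν - 2) = 1 + x ^ 2 / ν := by
    rw [div_pow, sq_sqrt (div_nonneg (by linarith) (by linarith))]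
    field_simp [(by linarith : ν - 2 ≠ 0)]
  rw [tpdf_eq, hbase, ← mul_assoc, sqrt_mul_tpdfConst_sub_two hν, show ν - 2 + 1 = ν - 1 by ring]

lemma integral_max_sub_mul_tpdf {ν : ℝ} (hν : 2 < ν) (a : ℝ) :
    ∫ x, max (a - x) 0 * tpdf ν x
      = a * tcdf ν a + √(ν / (ν - 2)) * tpdf (ν - 2) (a / √(ν / (ν - 2))) := by
  have hpos : (fun x => max (a - x) 0 * tpdf ν x)
      = (Iic a).indicator fun x => a * tpdf ν x - x * tpdf ν x := by
    ext x
    by_cases hx : x ≤ a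
    · rw [indicator_of_mem (mem_Iic.2 hx), max_eq_left (by linarith), sub_mul]
    · rw [indicator_of_notMem (mt mem_Iic.1 hx), max_eq_right (by linarith), zero_mul]
  rw [hpos, integral_indicator measurableSet_Iic,
    integral_sub ((integrable_tpdf (by linarith)).const_mul a).integrableOn
      (integrable_mul_tpdf (by linarith)).integrableOn,
    integral_const_mul, setIntegral_Iic_mul_tpdf (by linarith), sqrt_mul_tpdf_sub_two hν, tcdf,
    sub_neg_eq_add]

lemma studentDensity_eq (ν μ σ t : ℝ) :
    studentDensity ν μ σ t = σ⁻¹ * tpdf ν ((t - μ) / σ) := by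
  rw [studentDensity, tpdf_eq, tpdfConst, div_pow, div_div, mul_comm (σ ^ 2) ν]
  ring

/-- Closed form of the expected improvement under a non-standardized
Student-t posterior with `ν > 2` degrees of freedom, location `μ` and scale `σ > 0`:
with `I = y* − μ` and `m = √(ν/(ν−2))`,
`∫ max(y*−t, 0) g(t) dt = I·Φ_ν(I/σ) + m·σ·φ_{ν−2}(I/(mσ))`. -/
theorem hei_closed_form (ν σ μ ystar : ℝ) (hν : 2 < ν) (hσ : 0 < σ)
    (I : ℝ) (hI : I = ystar - μ) (m : ℝ) (hm : m = Real.sqrt (ν / (ν - 2))) :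
    (∫ t : ℝ, max (ystar - t) 0 * studentDensity ν μ σ t) =
      I * tcdf ν (I / σ) + m * σ * tpdf (ν - 2) (I / (m * σ)) := by
  set f := fun x => max (I / σ - x) 0 * tpdf ν x
  have h_integrand : ∀ t, max (ystar - t) 0 * studentDensity ν μ σ t = f ((t - μ) / σ) := by
    intro t
    rw [studentDensity_eq, ← mul_assoc, mul_comm (max _ _),
      mul_max_of_nonneg _ _ (inv_nonneg.2 hσ.le), mul_zero]
    simp only [f, hI]
    congr 2
    ring
  calc (∫ t, max (ystar - t) 0 * studentDensity ν μ σ t)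
      = ∫ t, f ((t - μ) / σ) := integral_congr_ae (Eventually.of_forall h_integrand)
    _ = σ * ∫ x, f x := by
        rw [integral_sub_right_eq_self (fun t => f (t / σ)), Measure.integral_comp_div,
          abs_of_pos hσ, smul_eq_mul]
    _ = I * tcdf ν (I / σ) + m * σ * tpdf (ν - 2) (I / (m * σ)) := by
        rw [integral_max_sub_mul_tpdf hν, ← hm, mul_add, ← mul_assoc, mul_div_cancel₀ _ hσ.ne',
          div_div, mul_comm σ m]
        ring
end

section
/- For every real ν>0, the standard Student-t density evaluated at zero satisfies φ_ν(0) = Γ((ν+1)/2)/(√(νπ)·Γ(ν/2)) ≤ 2/5. Equivalently, Γ((ν+1)/2) ≤ (2/5)·√(νπ)·Γ(ν/2) for all ν>0. -/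
open Real

theorem Real.Gamma_add_half_le_sqrt_mul_Gamma {x : ℝ} (hx : 0 < x) :
    Gamma (x + 1 / 2) ≤ √x * Gamma x := by
  have hΓ : 0 < Gamma x := Gamma_pos_of_pos hx
  calc Gamma (x + 1 / 2) = Gamma (1 / 2 * x + 1 / 2 * (x + 1)) := by ring_nf
    _ ≤ Gamma x ^ (1 / 2 : ℝ) * Gamma (x + 1) ^ (1 / 2 : ℝ) :=
      Gamma_mul_add_mul_le_rpow_Gamma_mul_rpow_Gamma hx (by linarith)
        (by norm_num) (by norm_num) (by norm_num)
    _ = √x * Gamma x := by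
      rw [Gamma_add_one hx.ne', mul_rpow hx.le hΓ.le, sqrt_eq_rpow, mul_left_comm,
        ← rpow_add hΓ]
      norm_num

theorem tpdf_zero (ν : ℝ) :
    tpdf ν 0 = Gamma ((ν + 1) / 2) / (√(ν * π) * Gamma (ν / 2)) := by
  simp [tpdf]

theorem tpdf_zero_le_inv_sqrt_two_pi {ν : ℝ} (hν : 0 < ν) :
    tpdf ν 0 ≤ (√(2 * π))⁻¹ := by
  have hwendel : Gamma ((ν + 1) / 2) ≤ √(ν / 2) * Gamma (ν / 2) := by
    simpa [add_div] using Gamma_add_half_le_sqrt_mul_Gamma (half_pos hν)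
  have hsqrt : √(ν / 2) = √(ν * π) * (√(2 * π))⁻¹ := by
    rw [← sqrt_inv, ← sqrt_mul (by positivity)]
    congr 1
    field_simp
  rw [tpdf_zero, div_le_iff₀ (by positivity)]
  calc Gamma ((ν + 1) / 2) ≤ √(ν / 2) * Gamma (ν / 2) := hwendel
    _ = (√(2 * π))⁻¹ * (√(ν * π) * Gamma (ν / 2)) := by rw [hsqrt]; ring

theorem inv_sqrt_two_pi_le : (√(2 * π))⁻¹ ≤ 2 / 5 := by
  rw [inv_le_comm₀ (by positivity) (by norm_num), le_sqrt (by norm_num) (by positivity)]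
  nlinarith [pi_gt_d2]

/-- For every `ν > 0`, the standard Student-t density at zero
satisfies `φ_ν(0) = Γ((ν+1)/2)/(√(νπ)Γ(ν/2)) ≤ 2/5`; equivalently,
`Γ((ν+1)/2) ≤ (2/5)√(νπ)Γ(ν/2)`. -/
theorem tpdf_zero_le (ν : ℝ) (hν : 0 < ν) :
    tpdf ν 0 = Real.Gamma ((ν + 1) / 2) /
      (Real.sqrt (ν * Real.pi) * Real.Gamma (ν / 2)) ∧
    tpdf ν 0 ≤ 2 / 5 ∧
    Real.Gamma ((ν + 1) / 2) ≤
      2 / 5 * (Real.sqrt (ν * Real.pi) * Real.Gamma (ν / 2)) := by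
  have hle : tpdf ν 0 ≤ 2 / 5 := (tpdf_zero_le_inv_sqrt_two_pi hν).trans inv_sqrt_two_pi_le
  refine ⟨tpdf_zero ν, hle, ?_⟩
  rwa [tpdf_zero, div_le_iff₀ (by positivity)] at hle
end
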